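/- Let X = ℓ∞ⁿ. If a linear operator T on X preserves Birkhoff-James orthogonality at every extreme point of the unit ball (i.e., at every sign vector), then T is a scalar multiple of an isometry. -/

import Mathlib

/-- Birkhoff-James orthogonality. -/
def BirkhoffOrth {E : Type*} [NormedAddCommGroup E] [NormedSpace ℝ E] (u v : E) : Prop :=
  ∀ t : ℝ, ‖u‖ ≤ ‖u + t • v‖

namespace Stmt17Aux

variable {n : ℕ}

local notation "X" => PiLp ⊤ (fun _ : Fin n => ℝ)

lemma coord_le_norm (x : X) (i : Fin n) : |x i| ≤ ‖x‖ := by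
  haveI : Nonempty (Fin n) := ⟨i⟩
  rw [PiLp.norm_eq_ciSup]
  have := le_ciSup (f := fun j => ‖x j‖) (Finite.bddAbove_range _) i
  simpa [Real.norm_eq_abs] using this

lemma sign_abs (u : X) (hu : ∀ j, u j = 1 ∨ u j = -1) (j : Fin n) : |u j| = 1 := by
  rcases hu j with h | h <;> simp [h]

lemma sign_norm (u : X) (hu : ∀ j, u j = 1 ∨ u j = -1) (i : Fin n) : ‖u‖ = 1 := by
  haveI : Nonempty (Fin n) := ⟨i⟩
  apply le_antisymm
  · rw [PiLp.norm_eq_ciSup]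
    exact ciSup_le fun j => by simp [Real.norm_eq_abs, sign_abs u hu j]
  · calc (1:ℝ) = |u i| := (sign_abs u hu i).symm
      _ ≤ ‖u‖ := coord_le_norm _ _

lemma key (T : X →L[ℝ] X)
    (hT : ∀ u : X, (∀ j, u j = 1 ∨ u j = -1) →
      ∀ y, BirkhoffOrth u y → BirkhoffOrth (T u) (T y))
    (u x : X) (hu : ∀ j, u j = 1 ∨ u j = -1) (m : Fin n) (hm : x m = u m) :
    ‖T u‖ ≤ ‖T x‖ := by
  have horth : BirkhoffOrth u (x - u) := by
    intro t
    have h2 : (u + t • (x - u)) m = u m := by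
      have : (u + t • (x - u)) m = u m + t * (x m - u m) := rfl
      rw [this, hm]; ring
    calc ‖u‖ = 1 := sign_norm u hu m
      _ = |u m| := (sign_abs u hu m).symm
      _ = |(u + t • (x - u)) m| := by rw [h2]
      _ ≤ ‖u + t • (x - u)‖ := coord_le_norm _ _
  have h := hT u hu (x - u) horth 1
  simpa [map_sub] using h

/-- All sign vectors have the same image norm. -/
lemma eqS (T : X →L[ℝ] X)
    (hT : ∀ u : X, (∀ j, u j = 1 ∨ u j = -1) →
      ∀ y, BirkhoffOrth u y → BirkhoffOrth (T u) (T y)) :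
    ∀ (d : ℕ) (u u' : X), (∀ j, u j = 1 ∨ u j = -1) → (∀ j, u' j = 1 ∨ u' j = -1) →
      (Finset.univ.filter (fun i => u i ≠ u' i)).card ≤ d → ‖T u‖ = ‖T u'‖ := by
  intro d
  induction d with
  | zero =>
    intro u u' hu hu' hcard
    have hD : (Finset.univ.filter (fun i => u i ≠ u' i)) = ∅ :=
      Finset.card_eq_zero.mp (Nat.le_zero.mp hcard)
    have : u = u' := PiLp.ext fun i => by
      by_contra h
      have : i ∈ Finset.univ.filter (fun i => u i ≠ u' i) := by simp [h]
      simp [hD] at this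
    rw [this]
  | succ d ih =>
    intro u u' hu hu' hcard
    set D := Finset.univ.filter (fun i => u i ≠ u' i) with hDdef
    by_cases hle : D.card ≤ d
    · exact ih u u' hu hu' hle
    have hDne : D.Nonempty := Finset.card_pos.mp (by omega)
    obtain ⟨k, hk⟩ := hDne
    have hkne : u k ≠ u' k := by simpa [hDdef] using hk
    by_cases hDuniv : D = Finset.univ
    · -- u' = -u
      have huneg : u' = -u := PiLp.ext fun i => by
        have hi : u i ≠ u' i := by
          have : i ∈ D := hDuniv ▸ Finset.mem_univ i
          simpa [hDdef] using this
        show u' i = -(u i)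
        rcases hu i with h1 | h1 <;> rcases hu' i with h2 | h2
        · exact absurd (h1.trans h2.symm) hi
        · rw [h1, h2]
        · rw [h1, h2]; norm_num
        · exact absurd (h1.trans h2.symm) hi
      rw [huneg, map_neg, norm_neg]
    · obtain ⟨m, -, hm⟩ := Finset.not_subset.mp
        (fun h => hDuniv (le_antisymm (Finset.subset_univ D) h))
      have hmk : m ≠ k := fun h => hm (h ▸ hk)
      have hmeq : u m = u' m := by
        by_contra h
        exact hm (by simp [hDdef, h])
      set u'' : X := WithLp.toLp ⊤ (Function.update u k (u' k)) with hu''def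
      have hu'' : ∀ j, u'' j = 1 ∨ u'' j = -1 := by
        intro j
        by_cases hj : j = k
        · subst hj; simpa [hu''def] using hu' j
        · simpa [hu''def, Function.update_of_ne hj] using hu j
      have hu''m : u'' m = u m := by simp [hu''def, Function.update_of_ne hmk]
      have h1 : ‖T u‖ = ‖T u''‖ :=
        le_antisymm (key T hT u u'' hu m hu''m) (key T hT u'' u hu'' m hu''m.symm)
      have h2 : ‖T u''‖ = ‖T u'‖ := by
        apply ih u'' u' hu'' hu'
        have hsub : (Finset.univ.filter (fun i => u'' i ≠ u' i)) ⊆ D.erase k := by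
          intro i hi
          simp only [Finset.mem_filter, Finset.mem_univ, true_and] at hi
          have hik : i ≠ k := by
            intro h; subst h; exact hi (by simp [hu''def])
          refine Finset.mem_erase.mpr ⟨hik, ?_⟩
          simp only [hDdef, Finset.mem_filter, Finset.mem_univ, true_and]
          intro h
          exact hi (by simpa [hu''def, Function.update_of_ne hik] using h)
        calc (Finset.univ.filter (fun i => u'' i ≠ u' i)).card
            ≤ (D.erase k).card := Finset.card_le_card hsub
          _ = D.card - 1 := Finset.card_erase_of_mem hk
          _ ≤ d := by omega
      rw [h1, h2]

lemma upper (T : X →L[ℝ] X) (c : ℝ)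
    (hc : ∀ u : X, (∀ j, u j = 1 ∨ u j = -1) → ‖T u‖ = c) :
    ∀ (d : ℕ) (x : X),
      (Finset.univ.filter (fun i => x i ≠ 1 ∧ x i ≠ -1)).card ≤ d →
      (∀ i, |x i| ≤ 1) → ‖T x‖ ≤ c := by
  intro d
  induction d with
  | zero =>
    intro x hcard _
    have hD : (Finset.univ.filter (fun i => x i ≠ 1 ∧ x i ≠ -1)) = ∅ :=
      Finset.card_eq_zero.mp (Nat.le_zero.mp hcard)
    have hx : ∀ j, x j = 1 ∨ x j = -1 := fun j => by
      by_contra h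
      push_neg at h
      have : j ∈ Finset.univ.filter (fun i => x i ≠ 1 ∧ x i ≠ -1) := by
        simp [h.1, h.2]
      simp [hD] at this
    exact le_of_eq (hc x hx)
  | succ d ih =>
    intro x hcard hx
    set F := Finset.univ.filter (fun i => x i ≠ 1 ∧ x i ≠ -1) with hFdef
    by_cases hle : F.card ≤ d
    · exact ih x hle hx
    have hFne : F.Nonempty := Finset.card_pos.mp (by omega)
    obtain ⟨i₀, hi₀⟩ := hFne
    have hi₀' : x i₀ ≠ 1 ∧ x i₀ ≠ -1 := by simpa [hFdef] using hi₀
    set lam : ℝ := (1 + x i₀) / 2 with hlam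
    have habs : |x i₀| ≤ 1 := hx i₀
    have hlam0 : 0 ≤ lam := by rw [hlam]; cases abs_le.mp habs; linarith
    have hlam1 : lam ≤ 1 := by rw [hlam]; cases abs_le.mp habs; linarith
    set x1 : X := WithLp.toLp ⊤ (Function.update x i₀ 1) with hx1
    set x2 : X := WithLp.toLp ⊤ (Function.update x i₀ (-1)) with hx2
    have hdecomp : x = lam • x1 + (1 - lam) • x2 := by
      ext i
      by_cases hi : i = i₀
      · subst hi
        have : (lam • x1 + (1 - lam) • x2) i = lam * x1 i + (1 - lam) * x2 i := rfl
        rw [this]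
        simp only [hx1, hx2, WithLp.ofLp_toLp, Function.update_self]
        rw [hlam]; ring
      · have : (lam • x1 + (1 - lam) • x2) i = lam * x1 i + (1 - lam) * x2 i := rfl
        rw [this]
        simp only [hx1, hx2, WithLp.ofLp_toLp, Function.update_of_ne hi]
        ring
    have hcard1 : ∀ (y : X), (∀ i ≠ i₀, y i = x i) → (y i₀ = 1 ∨ y i₀ = -1) →
        (Finset.univ.filter (fun i => y i ≠ 1 ∧ y i ≠ -1)).card ≤ d := by
      intro y hy hy0
      have hsub : (Finset.univ.filter (fun i => y i ≠ 1 ∧ y i ≠ -1)) ⊆ F.erase i₀ := by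
        intro i hi
        simp only [Finset.mem_filter, Finset.mem_univ, true_and] at hi
        have hii : i ≠ i₀ := by
          intro h; subst h
          rcases hy0 with h | h
          · exact hi.1 h
          · exact hi.2 h
        refine Finset.mem_erase.mpr ⟨hii, ?_⟩
        simp only [hFdef, Finset.mem_filter, Finset.mem_univ, true_and]
        rw [← hy i hii]; exact hi
      calc (Finset.univ.filter (fun i => y i ≠ 1 ∧ y i ≠ -1)).card
          ≤ (F.erase i₀).card := Finset.card_le_card hsub
        _ = F.card - 1 := Finset.card_erase_of_mem hi₀
        _ ≤ d := by omega
    have hb1 : ‖T x1‖ ≤ c := by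
      apply ih x1 (hcard1 x1 (fun i hi => by simp [hx1, Function.update_of_ne hi]) (by simp [hx1]))
      intro i
      by_cases hi : i = i₀
      · subst hi; simp [hx1]
      · simpa [hx1, Function.update_of_ne hi] using hx i
    have hb2 : ‖T x2‖ ≤ c := by
      apply ih x2 (hcard1 x2 (fun i hi => by simp [hx2, Function.update_of_ne hi]) (by simp [hx2]))
      intro i
      by_cases hi : i = i₀
      · subst hi; simp [hx2]
      · simpa [hx2, Function.update_of_ne hi] using hx i
    calc ‖T x‖ = ‖lam • T x1 + (1 - lam) • T x2‖ := by
          rw [hdecomp]; rw [map_add, map_smul, map_smul]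
      _ ≤ ‖lam • T x1‖ + ‖(1 - lam) • T x2‖ := norm_add_le _ _
      _ = lam * ‖T x1‖ + (1 - lam) * ‖T x2‖ := by
          rw [norm_smul, norm_smul, Real.norm_eq_abs, Real.norm_eq_abs,
            abs_of_nonneg hlam0, abs_of_nonneg (by linarith)]
      _ ≤ lam * c + (1 - lam) * c := by
          have := mul_le_mul_of_nonneg_left hb1 hlam0
          have := mul_le_mul_of_nonneg_left hb2 (by linarith : (0:ℝ) ≤ 1 - lam)
          linarith
      _ = c := by ring

end Stmt17Aux

open Stmt17Aux in
theorem stmt17 {n : ℕ}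
    (T : PiLp ⊤ (fun _ : Fin n => ℝ) →L[ℝ] PiLp ⊤ (fun _ : Fin n => ℝ))
    (hT : ∀ u : PiLp ⊤ (fun _ : Fin n => ℝ), (∀ j, u j = 1 ∨ u j = -1) →
      ∀ y, BirkhoffOrth u y → BirkhoffOrth (T u) (T y)) :
    ∃ c : ℝ, 0 ≤ c ∧ ∀ x, ‖T x‖ = c * ‖x‖ := by
  rcases Nat.eq_zero_or_pos n with hn | hn
  · refine ⟨0, le_refl 0, fun x => ?_⟩
    subst hn
    have hx0 : x = 0 := Subsingleton.elim x 0
    rw [hx0, map_zero]; simp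
  · set ones : PiLp ⊤ (fun _ : Fin n => ℝ) := WithLp.toLp ⊤ (fun _ => (1:ℝ)) with hones
    have hones' : ∀ j, ones j = 1 ∨ ones j = -1 := fun j => Or.inl rfl
    set c : ℝ := ‖T ones‖ with hc
    have hcsign : ∀ u : PiLp ⊤ (fun _ : Fin n => ℝ), (∀ j, u j = 1 ∨ u j = -1) → ‖T u‖ = c :=
      fun u hu => eqS T hT n u ones hu hones'
        (le_trans (Finset.card_le_card (Finset.subset_univ _)) (by simp))
    refine ⟨c, norm_nonneg _, fun x => ?_⟩
    by_cases hx0 : x = 0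
    · rw [hx0, map_zero]; simp
    have hr : 0 < ‖x‖ := norm_pos_iff.mpr hx0
    set z : PiLp ⊤ (fun _ : Fin n => ℝ) := ‖x‖⁻¹ • x with hz
    have hz1 : ‖z‖ = 1 := by
      rw [hz, norm_smul, Real.norm_eq_abs, abs_of_nonneg (inv_nonneg.mpr hr.le),
        inv_mul_cancel₀ hr.ne']
    -- maximizing coordinate
    haveI : Nonempty (Fin n) := ⟨⟨0, hn⟩⟩
    obtain ⟨k, hk⟩ := Finite.exists_max (fun i => |z i|)
    have hzk : |z k| = 1 := by
      refine le_antisymm (hz1 ▸ coord_le_norm z k) ?_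
      rw [← hz1, PiLp.norm_eq_ciSup]
      exact ciSup_le fun i => by simpa [Real.norm_eq_abs] using hk i
    -- lower bound
    set u : PiLp ⊤ (fun _ : Fin n => ℝ) := WithLp.toLp ⊤ (fun i => if i = k then z k else 1) with hu
    have husign : ∀ j, u j = 1 ∨ u j = -1 := by
      intro j
      by_cases hj : j = k
      · subst hj; simpa [hu] using (abs_eq (by norm_num : (0:ℝ) ≤ 1)).mp hzk
      · simp [hu, hj]
    have hlow : c ≤ ‖T z‖ := by
      have := key T hT u z husign k (by simp [hu])
      rwa [hcsign u husign] at this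
    have hup : ‖T z‖ ≤ c := by
      apply upper T c hcsign n z (le_trans (Finset.card_le_card (Finset.subset_univ _)) (by simp))
      intro i
      exact hz1 ▸ coord_le_norm z i
    have hTz : ‖T z‖ = c := le_antisymm hup hlow
    have hxz : x = ‖x‖ • z := by
      rw [hz, smul_smul, mul_inv_cancel₀ hr.ne', one_smul]
    calc ‖T x‖ = ‖T (‖x‖ • z)‖ := by rw [← hxz]
      _ = ‖x‖ * ‖T z‖ := by
          rw [map_smul, norm_smul, Real.norm_eq_abs, abs_of_nonneg hr.le]
      _ = c * ‖x‖ := by rw [hTz]; ring
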